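/- arXiv:1303.7350 — 3 statements merged into one kernel-verified Lean document; each statement's English description precedes it below -/
import Mathlib

section
/- Let R be a commutative ring, 𝔞 ⊊ R a proper ideal, n > 0, and N the graded R-module with N_n = R/𝔞 and N_i = 0 for i ≠ n. Then the tensor algebra T(N) is graded commutative if and only if n is even or the characteristic of R/𝔞 is 2. -/
open TensorProduct

/-- The degree-`n` piece of the tensor algebra `T(N)` for the grading induced by a grading
`𝒩` on `N`: the span of the products `ι x₁ * ⋯ * ι xₖ` with `xⱼ` homogeneous of degrees
summing to `n`. -/
def gradePiece (R N : Type*) [CommRing R] [AddCommGroup N] [Module R N]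
    (𝒩 : ℕ → Submodule R N) (n : ℕ) : Submodule R (TensorAlgebra R N) :=
  Submodule.span R {w | ∃ l : List (N × ℕ), (∀ p ∈ l, p.1 ∈ 𝒩 p.2) ∧
    (l.map Prod.snd).sum = n ∧ w = (l.map fun p => TensorAlgebra.ι R p.1).prod}

/-- The tensor algebra `T(N)` on a graded module `(N, 𝒩)` is graded commutative:
`a * b = (-1)^(pq) • (b * a)` for homogeneous `a`, `b` of degrees `p`, `q`. -/
def TAGradedComm (R N : Type*) [CommRing R] [AddCommGroup N] [Module R N]
    (𝒩 : ℕ → Submodule R N) : Prop :=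
  ∀ p q : ℕ, ∀ a ∈ gradePiece R N 𝒩 p, ∀ b ∈ gradePiece R N 𝒩 q,
    a * b = ((-1 : R) ^ (p * q)) • (b * a)

section Aux

variable {R : Type*} [CommRing R] (𝔞 : Ideal R)

private lemma iota_comm (x y : R ⧸ 𝔞) :
    TensorAlgebra.ι R x * TensorAlgebra.ι R y
      = TensorAlgebra.ι R y * TensorAlgebra.ι R x := by
  obtain ⟨r, rfl⟩ := Ideal.Quotient.mk_surjective x
  obtain ⟨s, rfl⟩ := Ideal.Quotient.mk_surjective y
  have hr : (Ideal.Quotient.mk 𝔞 r) = r • (1 : R ⧸ 𝔞) := by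
    simp [Algebra.smul_def]
  have hs : (Ideal.Quotient.mk 𝔞 s) = s • (1 : R ⧸ 𝔞) := by
    simp [Algebra.smul_def]
  rw [hr, hs, map_smul, map_smul, smul_mul_assoc, smul_mul_assoc, mul_smul_comm,
    mul_smul_comm, smul_smul, smul_smul, mul_comm r s]

private lemma ta_comm (a b : TensorAlgebra R (R ⧸ 𝔞)) : a * b = b * a := by
  induction a using TensorAlgebra.induction with
  | algebraMap r => rw [Algebra.commutes]
  | ι x =>
    induction b using TensorAlgebra.induction with
    | algebraMap r => rw [Algebra.commutes]
    | ι y => exact iota_comm 𝔞 x y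
    | mul u v hu hv => rw [← mul_assoc, hu, mul_assoc, hv, mul_assoc]
    | add u v hu hv => rw [mul_add, add_mul, hu, hv]
  | mul u v hu hv => rw [mul_assoc, hv, ← mul_assoc, hu, mul_assoc]
  | add u v hu hv => rw [add_mul, mul_add, hu, hv]

/-- If `n` is even and `p` is odd, the degree-`p` piece is zero. -/
private lemma gradePiece_eq_bot {n p : ℕ} (hn : Even n) (hp : ¬ Even p) :
    gradePiece R (R ⧸ 𝔞) (fun i => if i = n then (⊤ : Submodule R (R ⧸ 𝔞)) else ⊥) p = ⊥ := by
  rw [gradePiece, Submodule.span_eq_bot]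
  rintro w ⟨l, hhom, hsum, rfl⟩
  by_cases hall : ∀ pr ∈ l, pr.2 = n
  · exfalso
    apply hp
    have : (l.map Prod.snd).sum = (l.map Prod.snd).length • n := by
      apply List.sum_eq_card_nsmul
      intro x hx
      obtain ⟨pr, hpr, rfl⟩ := List.mem_map.mp hx
      exact hall pr hpr
    rw [← hsum, this, smul_eq_mul]
    exact hn.mul_left _
  · push_neg at hall
    obtain ⟨pr, hpr, hne⟩ := hall
    have h0 : pr.1 = 0 := by
      have := hhom pr hpr
      rw [if_neg hne] at this
      simpa using this
    apply List.prod_eq_zero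
    refine List.mem_map.mpr ⟨pr, hpr, ?_⟩
    rw [h0, map_zero]

/-- If `2 = 0` in `R ⧸ 𝔞`, elements of positive degree pieces are 2-torsion. -/
private lemma double_eq_zero (h2 : (2 : R ⧸ 𝔞) = 0) {𝒩 : ℕ → Submodule R (R ⧸ 𝔞)} {p : ℕ}
    (hp : 0 < p) {a : TensorAlgebra R (R ⧸ 𝔞)} (ha : a ∈ gradePiece R (R ⧸ 𝔞) 𝒩 p) :
    a + a = 0 := by
  induction ha using Submodule.span_induction with
  | mem w hw =>
    obtain ⟨l, hhom, hsum, rfl⟩ := hw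
    cases l with
    | nil => simp at hsum; omega
    | cons hd tl =>
      rw [List.map_cons, List.prod_cons, ← add_mul, ← map_add]
      have : hd.1 + hd.1 = 0 := by
        rw [← two_mul, h2, zero_mul]
      rw [this, map_zero, zero_mul]
  | zero => simp
  | add x y _ _ hx hy => rw [add_add_add_comm, hx, hy, add_zero]
  | smul r x _ hx => rw [← smul_add, hx, smul_zero]

end Aux

/-- For `N = (R/𝔞)[n]` with `𝔞` a proper ideal and `n > 0`, the tensor algebra `T(N)` is
graded commutative iff `n` is even or `char (R/𝔞) = 2`. -/
theorem tensorAlgebra_gradedComm_iff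
    (R : Type*) [CommRing R] (𝔞 : Ideal R) (h𝔞 : 𝔞 ≠ ⊤) (n : ℕ) (hn : 0 < n) :
    TAGradedComm R (R ⧸ 𝔞)
        (fun i => if i = n then (⊤ : Submodule R (R ⧸ 𝔞)) else ⊥) ↔
      Even n ∨ (2 : R ⧸ 𝔞) = 0 := by
  constructor
  · intro h
    by_contra hc
    push_neg at hc
    obtain ⟨hne, h2⟩ := hc
    have hodd : Odd n := Nat.odd_iff.mpr (Nat.not_even_iff.mp hne)
    have hmem : TensorAlgebra.ι R (1 : R ⧸ 𝔞) ∈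
        gradePiece R (R ⧸ 𝔞) (fun i => if i = n then (⊤ : Submodule R (R ⧸ 𝔞)) else ⊥) n := by
      apply Submodule.subset_span
      exact ⟨[((1 : R ⧸ 𝔞), n)], by simp, by simp, by simp⟩
    have key := h n n _ hmem _ hmem
    rw [(hodd.mul hodd).neg_one_pow, neg_one_smul] at key
    have := congrArg (TensorAlgebra.lift R (LinearMap.id : (R ⧸ 𝔞) →ₗ[R] (R ⧸ 𝔞))) key
    simp only [map_mul, map_neg, TensorAlgebra.lift_ι_apply, LinearMap.id_apply,
      one_mul] at this
    exact h2 (by linear_combination this)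
  · intro h p q a ha b hb
    by_cases hpq : Even (p * q)
    · rw [hpq.neg_one_pow, one_smul]
      exact ta_comm 𝔞 a b
    · have hp : Odd p := by
        rcases Nat.even_or_odd p with hp | hp
        · exact absurd (hp.mul_right q) hpq
        · exact hp
      rcases h with hne | h2
      · have : a = 0 := by
          have := gradePiece_eq_bot 𝔞 hne (Nat.not_even_iff_odd.mpr hp) ▸ ha
          simpa using this
        simp [this]
      · rw [(Nat.not_even_iff_odd.mp hpq).neg_one_pow, neg_one_smul, ta_comm 𝔞 b a]
        have hA : a + a = 0 := double_eq_zero 𝔞 h2 hp.pos ha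
        have : a * b + a * b = 0 := by rw [← add_mul, hA, zero_mul]
        exact eq_neg_of_add_eq_zero_left this
end

section
/- Let R be a field and N a positively graded R-module. The tensor algebra T(N) is graded commutative if and only if N = 0, or N is one-dimensional concentrated in a single degree n where n is even if char R ≠ 2 (n arbitrary positive if char R = 2). -/
open TensorProduct

/-!
If `T(N)` is graded commutative and `x ≠ 0` is homogeneous of degree `n`, then
`ι x * ι y = ± ι y * ι x` for every homogeneous `y`; mapping `T(N)` to `2 × 2` matrices shows
that this forces `y ∈ R ∙ x`, so `N = R ∙ x` sits in degree `n`, and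
`ι x * ι x = (-1) ^ (n * n) • (ι x * ι x) ≠ 0` forces `n` to be even unless `2 = 0`.
Conversely, if `N` is spanned by `x` in degree `n`, the degree-`p` piece of `T(N)` is spanned by
`ι x ^ (p / n)` and vanishes unless `n ∣ p`: any two homogeneous elements commute, and the sign
is `1` since their degrees are multiples of the even `n`.
-/

theorem Submodule.list_prod_mem_span_singleton_pow {R A : Type*} [CommSemiring R] [Semiring A]
    [Algebra R A] {a : A} {l : List A} (h : ∀ b ∈ l, b ∈ R ∙ a) : l.prod ∈ R ∙ a ^ l.length := by
  induction l with
  | nil => simp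
  | cons b l ih =>
    obtain ⟨c, rfl⟩ := mem_span_singleton.mp (h b List.mem_cons_self)
    obtain ⟨d, hd⟩ := mem_span_singleton.mp (ih fun b hb => h b (List.mem_cons_of_mem _ hb))
    exact mem_span_singleton.mpr ⟨c * d, by
      rw [List.prod_cons, ← hd, smul_mul_smul_comm, List.length_cons, pow_succ']⟩

theorem DirectSum.IsInternal.exists_mem_ne_zero {R N : Type*} [Semiring R] [AddCommMonoid N]
    [Module R N] [Nontrivial N] {𝒩 : ℕ → Submodule R N} (hint : DirectSum.IsInternal 𝒩) :
    ∃ n, ∃ x ∈ 𝒩 n, x ≠ 0 := by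
  obtain ⟨n, hn⟩ : ∃ n, 𝒩 n ≠ ⊥ := by
    by_contra! h
    exact bot_ne_top ((iSup_eq_bot.mpr h).symm.trans hint.submodule_iSup_eq_top)
  exact ⟨n, Submodule.exists_mem_ne_zero_of_ne_bot hn⟩

namespace TensorAlgebra

variable {R N : Type*} [Field R] [AddCommGroup N] [Module R N]

theorem ι_mul_ι_self_ne_zero {x : N} (hx : x ≠ 0) : ι R x * ι R x ≠ 0 := by
  obtain ⟨φ, hφ⟩ := Module.Projective.exists_dual_eq_one R hx
  intro h
  simpa [hφ] using congrArg (lift R φ) h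

theorem mem_span_singleton_of_ι_mul_ι_eq_smul {x y : N} {c : R} (hx : x ≠ 0)
    (h : ι R x * ι R y = c • (ι R y * ι R x)) : y ∈ R ∙ x := by
  by_contra hy
  obtain ⟨φ, hφx⟩ := Module.Projective.exists_dual_eq_one R hx
  obtain ⟨ψ, hψy, hψ⟩ := Submodule.exists_dual_map_eq_bot_of_notMem hy inferInstance
  have hψx : ψ x = 0 := (Submodule.eq_bot_iff _).mp hψ _
    (Submodule.mem_map_of_mem (Submodule.mem_span_singleton_self x))
  -- `ι v ↦ !![0, φ v; ψ v, 0]`: the `(0, 0)` entries of the two sides are `ψ y` and `0`.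
  let f : N →ₗ[R] Matrix (Fin 2) (Fin 2) R :=
    φ.smulRight (Matrix.single 0 1 1) + ψ.smulRight (Matrix.single 1 0 1)
  have h00 := congrFun (congrFun (congrArg (lift R f) h) 0) 0
  simp [f, Matrix.mul_apply, hφx, hψx] at h00
  exact hψy h00

end TensorAlgebra

section GradePiece

variable {R N : Type*} [CommRing R] [AddCommGroup N] [Module R N] {𝒩 : ℕ → Submodule R N}

theorem ι_mem_gradePiece {p : ℕ} {x : N} (hx : x ∈ 𝒩 p) :
    TensorAlgebra.ι R x ∈ gradePiece R N 𝒩 p :=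
  Submodule.subset_span ⟨[(x, p)], by simpa using hx, by simp, by simp⟩

theorem gradePiece_le_span_singleton_pow {x₀ : N} {n : ℕ} (hn : 0 < n) (hx₀ : 𝒩 n ≤ R ∙ x₀)
    (hbot : ∀ m ≠ n, 𝒩 m = ⊥) (p : ℕ) :
    gradePiece R N 𝒩 p ≤ if n ∣ p then R ∙ TensorAlgebra.ι R x₀ ^ (p / n) else ⊥ := by
  rw [gradePiece, Submodule.span_le]
  rintro _ ⟨l, hl, rfl, rfl⟩
  by_cases hdeg : ∀ q ∈ l, q.2 = n
  · have hsum : (l.map Prod.snd).sum = l.length * n := by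
      simp [List.map_congr_left hdeg]
    rw [hsum, if_pos (dvd_mul_left n _), Nat.mul_div_cancel _ hn]
    have hfactors :
        ∀ w ∈ l.map fun q => TensorAlgebra.ι R q.1, w ∈ R ∙ TensorAlgebra.ι R x₀ := by
      simp only [List.mem_map]
      rintro _ ⟨q, hq, rfl⟩
      obtain ⟨c, hc⟩ := Submodule.mem_span_singleton.mp (hx₀ (hdeg q hq ▸ hl q hq))
      exact Submodule.mem_span_singleton.mpr ⟨c, by rw [← hc, map_smul]⟩
    simpa using Submodule.list_prod_mem_span_singleton_pow hfactors
  · push Not at hdeg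
    obtain ⟨q, hq, hqn⟩ := hdeg
    have hq0 : q.1 = 0 := by simpa [hbot q.2 hqn] using hl q hq
    rw [List.prod_eq_zero (List.mem_map.mpr ⟨q, hq, by simp [hq0]⟩)]
    split_ifs <;> exact zero_mem _

theorem taGradedComm_of_le_span_singleton {x₀ : N} {n : ℕ} (hn : 0 < n) (hx₀ : 𝒩 n ≤ R ∙ x₀)
    (hbot : ∀ m ≠ n, 𝒩 m = ⊥) (heven : (2 : R) ≠ 0 → Even n) : TAGradedComm R N 𝒩 := by
  intro p q a ha b hb
  have ha' := gradePiece_le_span_singleton_pow hn hx₀ hbot p ha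
  have hb' := gradePiece_le_span_singleton_pow hn hx₀ hbot q hb
  split_ifs at ha' hb' with hp hq
  · obtain ⟨r, rfl⟩ := Submodule.mem_span_singleton.mp ha'
    obtain ⟨s, rfl⟩ := Submodule.mem_span_singleton.mp hb'
    have hsign : (-1 : R) ^ (p * q) = 1 := by
      by_cases h2 : (2 : R) = 0
      · rw [show (-1 : R) = 1 by linear_combination -h2, one_pow]
      · exact (even_iff_two_dvd.mpr ((heven h2).two_dvd.trans hp)).mul_right q |>.neg_one_pow
    rw [hsign, one_smul, smul_mul_smul_comm, smul_mul_smul_comm, mul_comm r s, pow_mul_comm]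
  all_goals simp_all

end GradePiece

namespace TAGradedComm

variable {R N : Type*} [Field R] [AddCommGroup N] [Module R N] {𝒩 : ℕ → Submodule R N}
  {n : ℕ} {x : N}

theorem mem_span_singleton (H : TAGradedComm R N 𝒩) (hx : x ∈ 𝒩 n) (hx0 : x ≠ 0) {q : ℕ} {y : N}
    (hy : y ∈ 𝒩 q) : y ∈ R ∙ x :=
  TensorAlgebra.mem_span_singleton_of_ι_mul_ι_eq_smul hx0
    (H n q _ (ι_mem_gradePiece hx) _ (ι_mem_gradePiece hy))

theorem span_singleton_eq_top (H : TAGradedComm R N 𝒩) (hx : x ∈ 𝒩 n) (hx0 : x ≠ 0)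
    (hint : DirectSum.IsInternal 𝒩) : R ∙ x = ⊤ := by
  rw [eq_top_iff, ← hint.submodule_iSup_eq_top]
  exact iSup_le fun q y hy => H.mem_span_singleton hx hx0 hy

theorem even (H : TAGradedComm R N 𝒩) (hx : x ∈ 𝒩 n) (hx0 : x ≠ 0) (h2 : (2 : R) ≠ 0) :
    Even n := by
  by_contra hodd
  have hc := H n n _ (ι_mem_gradePiece hx) _ (ι_mem_gradePiece hx)
  rw [(Nat.not_even_iff_odd.mp hodd).mul (Nat.not_even_iff_odd.mp hodd) |>.neg_one_pow,
    neg_one_smul, eq_neg_iff_add_eq_zero, ← two_smul R] at hc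
  exact TensorAlgebra.ι_mul_ι_self_ne_zero hx0 ((smul_eq_zero.mp hc).resolve_left h2)

end TAGradedComm

/-- Over a field, `T(N)` is graded commutative iff `N = 0` or `N` is one-dimensional,
concentrated in a single degree `n > 0` which is even when `char R ≠ 2`. -/
theorem tensorAlgebra_gradedComm_iff_of_field
    (R N : Type*) [Field R] [AddCommGroup N] [Module R N]
    (𝒩 : ℕ → Submodule R N) (hint : DirectSum.IsInternal 𝒩) (h0 : 𝒩 0 = ⊥) :
    TAGradedComm R N 𝒩 ↔
      (Subsingleton N ∨
        ∃ n : ℕ, 0 < n ∧ 𝒩 n = ⊤ ∧ Module.finrank R N = 1 ∧ ((2 : R) ≠ 0 → Even n)) := by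
  constructor
  · intro H
    rcases subsingleton_or_nontrivial N with hs | hN
    · exact Or.inl hs
    right
    obtain ⟨n, x, hx, hx0⟩ := hint.exists_mem_ne_zero
    have htop := H.span_singleton_eq_top hx hx0 hint
    have hn : n ≠ 0 := by
      rintro rfl
      exact hx0 (by simpa [h0] using hx)
    refine ⟨n, Nat.pos_of_ne_zero hn, ?_, ?_, H.even hx hx0⟩
    · exact top_le_iff.mp (htop ▸ (Submodule.span_singleton_le_iff_mem x _).mpr hx)
    · rw [← finrank_top, ← htop, finrank_span_singleton hx0]
  · rintro (hs | ⟨n, hn, hNn, hfr, heven⟩)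
    -- `N = 0` is spanned by `0` in degree `2`.
    · exact taGradedComm_of_le_span_singleton (x₀ := 0) two_pos
        (fun v _ => (Subsingleton.elim 0 v) ▸ Submodule.zero_mem _)
        (fun _ _ => Subsingleton.elim _ _) fun _ => even_two
    · obtain ⟨x₀, -, hx₀⟩ := finrank_eq_one_iff'.mp hfr
      exact taGradedComm_of_le_span_singleton hn
        (fun v _ => Submodule.mem_span_singleton.mpr (hx₀ v))
        (fun m hm => disjoint_top.mp (hNn ▸ hint.submodule_iSupIndep.pairwiseDisjoint hm)) heven
end

section
/- Let (R, 𝔪) be a local commutative ring and N a positively graded R-module of finite type (each graded piece finitely generated and only finitely many nonzero, or each piece finitely generated). If the tensor algebra T_R(N) is graded commutative, then N is zero or generated by a single element, i.e., N ≅ (R/𝔞)[n] for some ideal 𝔞 ⊆ 𝔪 and some n > 0. -/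
open TensorProduct

open Matrix in
theorem Matrix.single_add_single_mul_single_add_single {A : Type*} [Semiring A] (a b c d : A) :
    (single (0 : Fin 3) (1 : Fin 3) a + single 1 2 b) *
      (single 0 1 c + single (1 : Fin 3) (2 : Fin 3) d) = single 0 2 (a * d) := by
  simp [add_mul, mul_add]

theorem Subspace.mem_span_singleton_of_forall_dual {K V : Type*} [Field K] [AddCommGroup V]
    [Module K V] {v w : V} (h : ∀ ψ : Module.Dual K V, ψ v = 0 → ψ w = 0) : w ∈ K ∙ v := by
  rw [← Subspace.forall_mem_dualAnnihilator_apply_eq_zero_iff]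
  intro ψ hψ
  exact h ψ ((Submodule.mem_dualAnnihilator ψ).1 hψ v (Submodule.mem_span_singleton_self v))

theorem IsLocalRing.exists_linearEquiv_quotient_of_span_singleton_eq_top {R M : Type*}
    [CommRing R] [IsLocalRing R] [AddCommGroup M] [Module R M] {x : M} (hx : x ≠ 0)
    (hspan : R ∙ x = ⊤) :
    ∃ 𝔞 : Ideal R, 𝔞 ≤ IsLocalRing.maximalIdeal R ∧ Nonempty (M ≃ₗ[R] R ⧸ 𝔞) :=
  ⟨_, IsLocalRing.le_maximalIdeal ((Ideal.torsionOf_eq_top_iff R x).not.2 hx),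
    ⟨((Ideal.quotTorsionOfEquivSpanSingleton R M x).trans (LinearEquiv.ofTop _ hspan)).symm⟩⟩

theorem LinearMap.exists_mem_apply_ne_zero_of_iSup_eq_top {R M M' : Type*} [Semiring R]
    [AddCommMonoid M] [Module R M] [AddCommMonoid M'] [Module R M'] {ι : Type*}
    {𝒩 : ι → Submodule R M} (htop : iSup 𝒩 = ⊤) {f : M →ₗ[R] M'} (hf : f ≠ 0) :
    ∃ i, ∃ x ∈ 𝒩 i, f x ≠ 0 := by
  by_contra! h
  exact hf (LinearMap.ker_eq_top.1 (top_unique (htop.ge.trans (iSup_le fun i x hx => h i x hx))))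

namespace TAGradedComm

variable {R N : Type*} [CommRing R] [AddCommGroup N] [Module R N] {𝒩 : ℕ → Submodule R N}
  {p q : ℕ} {x y : N}

theorem ι_mul_ι (hcomm : TAGradedComm R N 𝒩) (hx : x ∈ 𝒩 p) (hy : y ∈ 𝒩 q) :
    TensorAlgebra.ι R x * TensorAlgebra.ι R y
      = ((-1 : R) ^ (p * q)) • (TensorAlgebra.ι R y * TensorAlgebra.ι R x) :=
  hcomm p q _ (Submodule.subset_span ⟨[(x, p)], by simpa using hx, by simp, by simp⟩)
    _ (Submodule.subset_span ⟨[(y, q)], by simpa using hy, by simp, by simp⟩)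

/-- Lift `v ↦ f v • E₀₁ + g v • E₁₂` to `T(N) → M₃(A)`: it sends `ι u * ι v` to
`(f u * g v) • E₀₂`. -/
theorem apply_mul_apply {A : Type*} [CommRing A] [Algebra R A] (hcomm : TAGradedComm R N 𝒩)
    (f g : N →ₗ[R] A) (hx : x ∈ 𝒩 p) (hy : y ∈ 𝒩 q) :
    f x * g y = ((-1 : R) ^ (p * q)) • (f y * g x) := by
  let L : N →ₗ[R] Matrix (Fin 3) (Fin 3) A :=
    (Matrix.singleLinearMap R 0 1).comp f + (Matrix.singleLinearMap R 1 2).comp g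
  have h := congrArg (TensorAlgebra.lift R L) (hcomm.ι_mul_ι hx hy)
  simp only [map_mul, map_smul, TensorAlgebra.lift_ι_apply, L, LinearMap.add_apply,
    LinearMap.comp_apply, Matrix.singleLinearMap_apply,
    Matrix.single_add_single_mul_single_add_single] at h
  simpa using congrFun (congrFun h 0) 2

theorem apply_mem_span_singleton {K V : Type*} [Field K] [Algebra R K] [AddCommGroup V]
    [Module K V] [Module R V] [IsScalarTower R K V] (hcomm : TAGradedComm R N 𝒩)
    (θ : N →ₗ[R] V) (hx : x ∈ 𝒩 p) (hθx : θ x ≠ 0) (hy : y ∈ 𝒩 q) : θ y ∈ K ∙ θ x := by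
  refine Subspace.mem_span_singleton_of_forall_dual fun ψ hψ => ?_
  obtain ⟨φ, hφ⟩ := Module.Projective.exists_dual_ne_zero K hθx
  have h := hcomm.apply_mul_apply ((φ.restrictScalars R).comp θ) ((ψ.restrictScalars R).comp θ)
    hx hy
  simp only [LinearMap.comp_apply, LinearMap.coe_restrictScalars, hψ, mul_zero, smul_zero] at h
  exact (mul_eq_zero.1 h).resolve_left hφ

open IsLocalRing in
theorem span_singleton_eq_top_s11 [IsLocalRing R] [Module.Finite R N] (hcomm : TAGradedComm R N 𝒩)
    (htop : iSup 𝒩 = ⊤) (hx : x ∈ 𝒩 p)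
    (hθx : (1 : ResidueField R) ⊗ₜ[R] x ≠ 0) : R ∙ x = ⊤ := by
  set θ := TensorProduct.mk R (ResidueField R) N 1
  rw [← map_tensorProduct_mk_eq_top, Submodule.map_span, Set.image_singleton,
    ← Submodule.restrictScalars_span R (ResidueField R) residue_surjective, eq_top_iff]
  calc ⊤ = (⊤ : Submodule R N).map θ := (map_tensorProduct_mk_eq_top.2 rfl).symm
    _ = ⨆ n, (𝒩 n).map θ := by rw [← htop, Submodule.map_iSup]
    _ ≤ _ := iSup_le fun n => Submodule.map_le_iff_le_comap.2 fun y hy =>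
      Submodule.mem_comap.2 (hcomm.apply_mem_span_singleton θ hx hθx hy)

end TAGradedComm

/-- Over a local ring `(R, 𝔪)`, if `N` is a positively graded module of finite type and
`T_R(N)` is graded commutative, then `N` is zero or cyclic, concentrated in a single degree:
`N ≅ (R/𝔞)[n]` for some ideal `𝔞 ⊆ 𝔪` and some `n > 0`. -/
theorem cyclic_of_tensorAlgebra_gradedComm_local
    (R N : Type*) [CommRing R] [IsLocalRing R] [AddCommGroup N] [Module R N]
    [Module.Finite R N]
    (𝒩 : ℕ → Submodule R N) (hint : DirectSum.IsInternal 𝒩) (h0 : 𝒩 0 = ⊥)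
    (hcomm : TAGradedComm R N 𝒩) :
    Subsingleton N ∨
      ∃ n : ℕ, 0 < n ∧ 𝒩 n = ⊤ ∧
        ∃ 𝔞 : Ideal R, 𝔞 ≤ IsLocalRing.maximalIdeal R ∧ Nonempty (N ≃ₗ[R] R ⧸ 𝔞) := by
  set θ := TensorProduct.mk R (IsLocalRing.ResidueField R) N 1
  by_cases hθ : θ = 0
  · left
    have hsurj := TensorProduct.mk_surjective R N _ IsLocalRing.residue_surjective
    refine (IsLocalRing.subsingleton_tensorProduct (R := R)).1 ⟨fun v w => ?_⟩
    obtain ⟨⟨a, rfl⟩, ⟨b, rfl⟩⟩ := And.intro (hsurj v) (hsurj w)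
    exact (LinearMap.congr_fun hθ a).trans (LinearMap.congr_fun hθ b).symm
  right
  obtain ⟨p, x, hx, hθx⟩ :=
    LinearMap.exists_mem_apply_ne_zero_of_iSup_eq_top hint.submodule_iSup_eq_top hθ
  have hspan : R ∙ x = ⊤ := hcomm.span_singleton_eq_top_s11 hint.submodule_iSup_eq_top hx hθx
  have hx0 : x ≠ 0 := by rintro rfl; exact hθx (map_zero θ)
  have hp : 0 < p := Nat.pos_of_ne_zero fun hp0 => hx0 (by simpa [hp0, h0] using hx)
  exact ⟨p, hp, top_le_iff.1 (hspan ▸ (Submodule.span_singleton_le_iff_mem x _).2 hx),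
    IsLocalRing.exists_linearEquiv_quotient_of_span_singleton_eq_top hx0 hspan⟩
end
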